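/- arXiv:1006.5236 — 6 statements merged into one kernel-verified Lean document; each statement's English description precedes it below -/
import Mathlib

section
/- Let (A,*) be a unitary ring with an involution. Then GL_*(2,A) is a group under matrix multiplication, and the *-determinant det_* : GL_*(2,A) → Z_s(A)^×, given by det_*(g) = ad* − bc* for g = [[a,b],[c,d]], is a surjective group homomorphism onto the group Z_s(A)^× of symmetric, central, invertible elements of A. -/
/-- The `*`-determinant of a 2×2 matrix over a ring with involution. -/
def detStar {A : Type*} [Ring A] [StarRing A] (g : Matrix (Fin 2) (Fin 2) A) : A :=
  g 0 0 * star (g 1 1) - g 0 1 * star (g 1 0)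

/-- The set of symmetric, central, invertible elements of `A`. -/
def ZsUnits (A : Type*) [Ring A] [StarRing A] : Set A :=
  {z | star z = z ∧ z ∈ Set.center A ∧ IsUnit z}

/-- The set `GL_*(2,A)` of matrices `[[a,b],[c,d]]` with `ab* = ba*`, `cd* = dc*`,
`a*c = c*a`, `b*d = d*b`, `ad* − bc* = a*d − c*b ∈ Z_s(A)^×`. -/
def GLstar (A : Type*) [Ring A] [StarRing A] : Set (Matrix (Fin 2) (Fin 2) A) :=
  {g | g 0 0 * star (g 0 1) = g 0 1 * star (g 0 0) ∧
       g 1 0 * star (g 1 1) = g 1 1 * star (g 1 0) ∧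
       star (g 0 0) * g 1 0 = star (g 1 0) * g 0 0 ∧
       star (g 0 1) * g 1 1 = star (g 1 1) * g 0 1 ∧
       g 0 0 * star (g 1 1) - g 0 1 * star (g 1 0)
         = star (g 0 0) * g 1 1 - star (g 1 0) * g 0 1 ∧
       (g 0 0 * star (g 1 1) - g 0 1 * star (g 1 0)) ∈ ZsUnits A}

section Aux

variable {A : Type*} [Ring A] [StarRing A]

/-- The star-adjugate of a 2×2 matrix. -/
def sigmaM (g : Matrix (Fin 2) (Fin 2) A) : Matrix (Fin 2) (Fin 2) A :=
  !![star (g 1 1), -star (g 0 1); -star (g 1 0), star (g 0 0)]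

theorem sigmaM_mul (g h : Matrix (Fin 2) (Fin 2) A) :
    sigmaM (g * h) = sigmaM h * sigmaM g := by
  ext i j
  fin_cases i <;> fin_cases j <;>
    simp [sigmaM, Matrix.mul_apply, Fin.sum_univ_two, star_add, StarMul.star_mul,
      mul_neg, neg_mul] <;>
    abel

theorem sigmaM_one : sigmaM (1 : Matrix (Fin 2) (Fin 2) A) = 1 := by
  ext i j
  fin_cases i <;> fin_cases j <;> simp [sigmaM, Matrix.one_apply]

theorem zs_comm {D : A} (hD : D ∈ ZsUnits A) (a : A) : Commute D a :=
  ((Semigroup.mem_center_iff.mp hD.2.1) a).symm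

theorem zs_star {D : A} (hD : D ∈ ZsUnits A) : star D = D := hD.1

/-- Existence of a symmetric central inverse. -/
theorem zs_inv {D : A} (hD : D ∈ ZsUnits A) :
    ∃ e, e ∈ ZsUnits A ∧ D * e = 1 ∧ e * D = 1 := by
  obtain ⟨u, hu⟩ := hD.2.2
  refine ⟨(↑u⁻¹ : Aˣ), ?_, ?_, ?_⟩
  · have h1 : D * (↑u⁻¹ : Aˣ) = 1 := by rw [← hu]; exact u.mul_inv
    have h2 : ((↑u⁻¹ : Aˣ) : A) * D = 1 := by rw [← hu]; exact u.inv_mul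
    have hcomm : ∀ a : A, a * (↑u⁻¹ : Aˣ) = (↑u⁻¹ : Aˣ) * a := by
      intro a
      calc a * (↑u⁻¹ : Aˣ) = 1 * (a * (↑u⁻¹ : Aˣ)) := (one_mul _).symm
        _ = ((↑u⁻¹ : Aˣ) * D) * (a * (↑u⁻¹ : Aˣ)) := by rw [h2]
        _ = (↑u⁻¹ : Aˣ) * ((D * a) * (↑u⁻¹ : Aˣ)) := by
            rw [mul_assoc, ← mul_assoc D a]
        _ = (↑u⁻¹ : Aˣ) * ((a * D) * (↑u⁻¹ : Aˣ)) := by rw [(zs_comm hD a).eq]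
        _ = (↑u⁻¹ : Aˣ) * (a * (D * (↑u⁻¹ : Aˣ))) := by rw [mul_assoc a D]
        _ = (↑u⁻¹ : Aˣ) * a := by rw [h1, mul_one]
    have hstar : star ((↑u⁻¹ : Aˣ) : A) = (↑u⁻¹ : Aˣ) := by
      have h3 : star ((↑u⁻¹ : Aˣ) : A) * D = 1 := by
        have := congrArg star h1
        rwa [star_mul, star_one, zs_star hD] at this
      calc star ((↑u⁻¹ : Aˣ) : A) = star ((↑u⁻¹ : Aˣ) : A) * (D * (↑u⁻¹ : Aˣ)) := by
            rw [h1, mul_one]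
        _ = (star ((↑u⁻¹ : Aˣ) : A) * D) * (↑u⁻¹ : Aˣ) := by rw [mul_assoc]
        _ = (↑u⁻¹ : Aˣ) := by rw [h3, one_mul]
    exact ⟨hstar, Semigroup.mem_center_iff.mpr hcomm, u⁻¹.isUnit⟩
  · rw [← hu]; exact u.mul_inv
  · rw [← hu]; exact u.inv_mul

/-- Key direction: membership in `GLstar` gives the two matrix identities. -/
theorem mem_imp (g : Matrix (Fin 2) (Fin 2) A) (hg : g ∈ GLstar A) :
    g * sigmaM g = Matrix.scalar (Fin 2) (detStar g) ∧
      sigmaM g * g = Matrix.scalar (Fin 2) (detStar g) := by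
  obtain ⟨h1, h2, h3, h4, h5, hZ⟩ := hg
  have hs : star (g 0 0 * star (g 1 1) - g 0 1 * star (g 1 0))
      = g 0 0 * star (g 1 1) - g 0 1 * star (g 1 0) := hZ.1
  have hA : g 1 1 * star (g 0 0) - g 1 0 * star (g 0 1) = detStar g := by
    calc g 1 1 * star (g 0 0) - g 1 0 * star (g 0 1)
        = star (g 0 0 * star (g 1 1) - g 0 1 * star (g 1 0)) := by
          simp [star_sub, StarMul.star_mul]
      _ = detStar g := hs
  have hB : star (g 1 1) * g 0 0 - star (g 0 1) * g 1 0 = detStar g := by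
    calc star (g 1 1) * g 0 0 - star (g 0 1) * g 1 0
        = star (star (g 0 0) * g 1 1 - star (g 1 0) * g 0 1) := by
          simp [star_sub, StarMul.star_mul]
      _ = star (g 0 0 * star (g 1 1) - g 0 1 * star (g 1 0)) := by rw [← h5]
      _ = detStar g := hs
  constructor <;> (ext i j; fin_cases i <;> fin_cases j) <;>
    simp only [sigmaM, Matrix.mul_apply, Fin.sum_univ_two, Matrix.scalar_apply,
      Matrix.diagonal, mul_neg, neg_mul] <;>
    simp [Matrix.mul_apply, Fin.sum_univ_two, mul_neg, neg_mul]
  · rw [← sub_eq_add_neg]; rfl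
  · rw [h1, neg_add_cancel]
  · rw [h2, add_neg_cancel]
  · rw [neg_add_eq_sub]; exact hA
  · rw [← sub_eq_add_neg]; exact hB
  · rw [h4, add_neg_cancel]
  · rw [h3, neg_add_cancel]
  · rw [neg_add_eq_sub]; exact h5.symm

/-- Converse direction. -/
theorem imp_mem (g : Matrix (Fin 2) (Fin 2) A) (D : A) (hD : D ∈ ZsUnits A)
    (hm1 : g * sigmaM g = Matrix.scalar (Fin 2) D)
    (hm2 : sigmaM g * g = Matrix.scalar (Fin 2) D) :
    g ∈ GLstar A ∧ detStar g = D := by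
  have e00 := congrFun (congrFun hm1 0) 0
  have e01 := congrFun (congrFun hm1 0) 1
  have e10 := congrFun (congrFun hm1 1) 0
  have f01 := congrFun (congrFun hm2 0) 1
  have f10 := congrFun (congrFun hm2 1) 0
  have f11 := congrFun (congrFun hm2 1) 1
  simp only [sigmaM, Matrix.mul_apply, Fin.sum_univ_two, Matrix.scalar_apply,
    Matrix.diagonal, mul_neg, neg_mul] at e00 e01 e10 f01 f10 f11
  simp [Matrix.mul_apply, Fin.sum_univ_two, mul_neg, neg_mul] at e00 e01 e10 f01 f10 f11
  have hdet : detStar g = D := by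
    rw [detStar, sub_eq_add_neg]; exact e00
  have c1 : g 0 0 * star (g 0 1) = g 0 1 * star (g 0 0) := by
    have := e01
    rwa [neg_add_eq_zero] at this
  have c2 : g 1 0 * star (g 1 1) = g 1 1 * star (g 1 0) := by
    have := e10
    rwa [add_neg_eq_zero] at this
  have c3 : star (g 0 0) * g 1 0 = star (g 1 0) * g 0 0 := by
    have := f10
    rw [neg_add_eq_zero] at this
    exact this.symm
  have c4 : star (g 0 1) * g 1 1 = star (g 1 1) * g 0 1 := by
    have := f01
    rw [add_neg_eq_zero] at this
    exact this.symm
  have c5 : g 0 0 * star (g 1 1) - g 0 1 * star (g 1 0)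
      = star (g 0 0) * g 1 1 - star (g 1 0) * g 0 1 := by
    have hf : star (g 0 0) * g 1 1 - star (g 1 0) * g 0 1 = D := by
      rw [sub_eq_add_neg, add_comm]; exact f11
    rw [hf, ← hdet]; rfl
  refine ⟨⟨c1, c2, c3, c4, c5, ?_⟩, hdet⟩
  have : (g 0 0 * star (g 1 1) - g 0 1 * star (g 1 0)) = D := hdet
  rw [this]; exact hD

end Aux

/-- `GL_*(2,A)` is a group under matrix multiplication and
`det_*` is a surjective group homomorphism onto `Z_s(A)^×`. -/
theorem GLstar_group_and_detStar_surjective_hom (A : Type*) [Ring A] [StarRing A] :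
    (1 : Matrix (Fin 2) (Fin 2) A) ∈ GLstar A ∧
    (∀ g ∈ GLstar A, ∀ h ∈ GLstar A, g * h ∈ GLstar A) ∧
    (∀ g ∈ GLstar A, ∃ g' ∈ GLstar A, g * g' = 1 ∧ g' * g = 1) ∧
    detStar (1 : Matrix (Fin 2) (Fin 2) A) = 1 ∧
    (∀ g ∈ GLstar A, ∀ h ∈ GLstar A, detStar (g * h) = detStar g * detStar h) ∧
    (∀ g ∈ GLstar A, detStar g ∈ ZsUnits A) ∧
    (∀ z ∈ ZsUnits A, ∃ g ∈ GLstar A, detStar g = z) := by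
  have hZone : (1 : A) ∈ ZsUnits A := ⟨star_one A, Set.one_mem_center, isUnit_one⟩
  have hdetmem : ∀ g ∈ GLstar A, detStar g ∈ ZsUnits A := by
    intro g hg
    exact hg.2.2.2.2.2
  have hZmul : ∀ {x y : A}, x ∈ ZsUnits A → y ∈ ZsUnits A → x * y ∈ ZsUnits A := by
    intro x y hx hy
    refine ⟨?_, Set.mul_mem_center hx.2.1 hy.2.1, hx.2.2.mul hy.2.2⟩
    rw [star_mul, hx.1, hy.1, (zs_comm hy x).eq]
  have key : ∀ g ∈ GLstar A, ∀ h ∈ GLstar A,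
      g * h ∈ GLstar A ∧ detStar (g * h) = detStar g * detStar h := by
    intro g hg h hh
    obtain ⟨hg1, hg2⟩ := mem_imp g hg
    obtain ⟨hh1, hh2⟩ := mem_imp h hh
    have hDg := hdetmem g hg
    have hDh := hdetmem h hh
    have m1 : (g * h) * sigmaM (g * h)
        = Matrix.scalar (Fin 2) (detStar g * detStar h) := by
      rw [sigmaM_mul]
      calc (g * h) * (sigmaM h * sigmaM g)
          = g * (h * sigmaM h) * sigmaM g := by noncomm_ring
        _ = g * Matrix.scalar (Fin 2) (detStar h) * sigmaM g := by rw [hh1]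
        _ = g * (sigmaM g * Matrix.scalar (Fin 2) (detStar h)) := by
            rw [mul_assoc, ← (Matrix.scalar_commute (detStar h)
              (fun r => zs_comm hDh r) (sigmaM g)).eq]
        _ = (g * sigmaM g) * Matrix.scalar (Fin 2) (detStar h) := by rw [mul_assoc]
        _ = Matrix.scalar (Fin 2) (detStar g) * Matrix.scalar (Fin 2) (detStar h) := by
            rw [hg1]
        _ = Matrix.scalar (Fin 2) (detStar g * detStar h) := (map_mul _ _ _).symm
    have m2 : sigmaM (g * h) * (g * h)
        = Matrix.scalar (Fin 2) (detStar g * detStar h) := by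
      rw [sigmaM_mul]
      calc (sigmaM h * sigmaM g) * (g * h)
          = sigmaM h * (sigmaM g * g) * h := by noncomm_ring
        _ = sigmaM h * Matrix.scalar (Fin 2) (detStar g) * h := by rw [hg2]
        _ = Matrix.scalar (Fin 2) (detStar g) * sigmaM h * h := by
            rw [(Matrix.scalar_commute (detStar g)
              (fun r => zs_comm hDg r) (sigmaM h)).eq]
        _ = Matrix.scalar (Fin 2) (detStar g) * Matrix.scalar (Fin 2) (detStar h) := by
            rw [mul_assoc, hh2]
        _ = Matrix.scalar (Fin 2) (detStar g * detStar h) := (map_mul _ _ _).symm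
    exact imp_mem (g * h) _ (hZmul (hdetmem g hg) (hdetmem h hh)) m1 m2
  refine ⟨?_, fun g hg h hh => (key g hg h hh).1, ?_, ?_,
    fun g hg h hh => (key g hg h hh).2, hdetmem, ?_⟩
  · refine ⟨?_, ?_, ?_, ?_, ?_, ?_⟩ <;> simp [Matrix.one_apply]
    exact hZone
  · -- inverses
    intro g hg
    obtain ⟨hg1, hg2⟩ := mem_imp g hg
    have hD := hdetmem g hg
    obtain ⟨e, he, hDe, heD⟩ := zs_inv hD
    set D := detStar g with hDdef
    have cse : ∀ M : Matrix (Fin 2) (Fin 2) A,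
        Matrix.scalar (Fin 2) e * M = M * Matrix.scalar (Fin 2) e :=
      fun M => (Matrix.scalar_commute e (fun r => zs_comm he r) M).eq
    set g' : Matrix (Fin 2) (Fin 2) A := Matrix.scalar (Fin 2) e * sigmaM g with hg'def
    have hscal : ∀ a b : A, Matrix.scalar (Fin 2) a * Matrix.scalar (Fin 2) b
        = Matrix.scalar (Fin 2) (a * b) := fun a b => (map_mul _ _ _).symm
    have hgg' : g * g' = 1 := by
      rw [hg'def, ← mul_assoc, ← cse g, mul_assoc, hg1, hscal, heD, map_one]
    have hg'g : g' * g = 1 := by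
      rw [hg'def, mul_assoc, hg2, hscal, heD, map_one]
    have s1 : sigmaM g' * sigmaM g = 1 := by
      rw [← sigmaM_mul, hgg', sigmaM_one]
    have t : sigmaM g * (Matrix.scalar (Fin 2) e * g) = 1 := by
      rw [← mul_assoc, ← cse (sigmaM g), mul_assoc, hg2, hscal, heD, map_one]
    have hsg' : sigmaM g' = Matrix.scalar (Fin 2) e * g := by
      calc sigmaM g' = sigmaM g' * (sigmaM g * (Matrix.scalar (Fin 2) e * g)) := by
            rw [t, mul_one]
        _ = (sigmaM g' * sigmaM g) * (Matrix.scalar (Fin 2) e * g) := by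
            rw [mul_assoc]
        _ = Matrix.scalar (Fin 2) e * g := by rw [s1, one_mul]
    have m1' : g' * sigmaM g' = Matrix.scalar (Fin 2) e := by
      rw [hsg', hg'def]
      calc (Matrix.scalar (Fin 2) e * sigmaM g) * (Matrix.scalar (Fin 2) e * g)
          = Matrix.scalar (Fin 2) e * (sigmaM g * Matrix.scalar (Fin 2) e * g) := by
            noncomm_ring
        _ = Matrix.scalar (Fin 2) e * (Matrix.scalar (Fin 2) e * (sigmaM g * g)) := by
            rw [← cse (sigmaM g), mul_assoc]
        _ = Matrix.scalar (Fin 2) e := by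
            rw [hg2, hscal, hscal, heD, mul_one]
    have m2' : sigmaM g' * g' = Matrix.scalar (Fin 2) e := by
      rw [hsg', hg'def]
      calc (Matrix.scalar (Fin 2) e * g) * (Matrix.scalar (Fin 2) e * sigmaM g)
          = Matrix.scalar (Fin 2) e * (g * Matrix.scalar (Fin 2) e * sigmaM g) := by
            noncomm_ring
        _ = Matrix.scalar (Fin 2) e * (Matrix.scalar (Fin 2) e * (g * sigmaM g)) := by
            rw [← cse g, mul_assoc]
        _ = Matrix.scalar (Fin 2) e := by
            rw [hg1, hscal, hscal, heD, mul_one]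
    exact ⟨g', (imp_mem g' e he m1' m2').1, hgg', hg'g⟩
  · simp [detStar, Matrix.one_apply]
  · -- surjectivity
    intro z hz
    refine ⟨!![z, 0; 0, 1], ⟨?_, ?_, ?_, ?_, ?_, ?_⟩, ?_⟩ <;>
      simp [detStar, hz.1]
    exact hz
end

section
/- Let A = M(n,k), k a field, with the transpose mapping as involution. If a, c ∈ A satisfy aᵗ c = cᵗ a and Aa + Ac = A (i.e. a and c generate A as a left ideal), then there exists a symmetric matrix s ∈ A such that a + s·c is invertible. -/
open Matrix

private lemma vecMulVec_mulVec' {n : ℕ} {k : Type*} [Field k] (u v x : Fin n → k) :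
    vecMulVec u v *ᵥ x = (v ⬝ᵥ x) • u := by
  ext i
  simp only [Matrix.mulVec, Matrix.vecMulVec_apply, dotProduct, Pi.smul_apply,
    smul_eq_mul, Finset.mul_sum]
  rw [Finset.sum_mul]
  exact Finset.sum_congr rfl fun j _ => by ring

private lemma aux_step {n : ℕ} {k : Type*} [Field k] :
    ∀ N : ℕ, ∀ a c : Matrix (Fin n) (Fin n) k,
    aᵀ * c = cᵀ * a →
    (∃ x y : Matrix (Fin n) (Fin n) k, x * a + y * c = 1) →
    Module.finrank k (LinearMap.ker a.mulVecLin) ≤ N →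
    ∃ s : Matrix (Fin n) (Fin n) k, sᵀ = s ∧ IsUnit (a + s * c) := by
  intro N
  induction N with
  | zero =>
    intro a c hcomm hcoprime hrank
    refine ⟨0, by simp, ?_⟩
    have hker : LinearMap.ker a.mulVecLin = ⊥ := by
      rw [← Submodule.finrank_eq_zero]
      omega
    have hdet : a.det ≠ 0 := by
      intro hd
      obtain ⟨v, hv, hav⟩ := (Matrix.exists_mulVec_eq_zero_iff).2 hd
      have hmem : v ∈ LinearMap.ker a.mulVecLin := by simpa using hav
      rw [hker] at hmem
      exact hv (by simpa using hmem)
    have := (Matrix.isUnit_iff_isUnit_det a).2 (isUnit_iff_ne_zero.2 hdet)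
    simpa using this
  | succ N ih =>
    intro a c hcomm hcoprime hrank
    by_cases h0 : LinearMap.ker a.mulVecLin = ⊥
    · exact ih a c hcomm hcoprime (by rw [h0]; simp)
    · -- pick v0 ≠ 0 in ker a
      obtain ⟨⟨v0, hv0mem⟩, hv0ne⟩ := Submodule.nonzero_mem_of_bot_lt (bot_lt_iff_ne_bot.2 h0)
      have hv0 : a *ᵥ v0 = 0 := hv0mem
      have hv0' : v0 ≠ 0 := by simpa [Submodule.mk_eq_zero] using hv0ne
      set w : Fin n → k := c *ᵥ v0 with hw
      -- w ≠ 0 by coprimality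
      have hwne : w ≠ 0 := by
        intro hweq
        obtain ⟨x, y, hxy⟩ := hcoprime
        apply hv0'
        have := congrArg (fun M => M *ᵥ v0) hxy
        simpa [Matrix.add_mulVec, ← Matrix.mulVec_mulVec, hv0, ← hw, hweq] using this.symm
      -- w ⊥ im a
      have hperp : ∀ y : Fin n → k, w ⬝ᵥ (a *ᵥ y) = 0 := by
        intro y
        calc w ⬝ᵥ (a *ᵥ y) = (aᵀ *ᵥ w) ⬝ᵥ y := by
              rw [Matrix.mulVec_transpose, Matrix.dotProduct_mulVec]
          _ = ((cᵀ * a) *ᵥ v0) ⬝ᵥ y := by rw [hw, Matrix.mulVec_mulVec, hcomm]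
          _ = 0 := by rw [← Matrix.mulVec_mulVec, hv0]; simp
      -- pick u with u ⬝ᵥ w = 1
      obtain ⟨i, hi⟩ : ∃ i, w i ≠ 0 := by
        by_contra h
        push_neg at h
        exact hwne (funext h)
      set u : Fin n → k := (w i)⁻¹ • (Pi.single i 1 : Fin n → k) with hu
      have huw : u ⬝ᵥ w = 1 := by
        simp [hu, dotProduct, Pi.single_apply, ite_mul, Finset.sum_ite_eq',
          inv_mul_cancel₀ hi]
      have hune : u ≠ 0 := by
        intro h
        rw [h] at huw
        simp at huw
      set s1 : Matrix (Fin n) (Fin n) k := vecMulVec u u with hs1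
      have hs1symm : s1ᵀ = s1 := by
        ext p q
        simp [hs1, Matrix.vecMulVec_apply, mul_comm]
      set a' := a + s1 * c with ha'
      have ha'mul : ∀ x : Fin n → k, a' *ᵥ x = a *ᵥ x + (u ⬝ᵥ (c *ᵥ x)) • u := by
        intro x
        rw [ha', Matrix.add_mulVec, ← Matrix.mulVec_mulVec, hs1, vecMulVec_mulVec']
      -- ker a' ⊆ ker a
      have hkerle : LinearMap.ker a'.mulVecLin ≤ LinearMap.ker a.mulVecLin := by
        intro x hx
        have hx' : a' *ᵥ x = 0 := hx
        rw [ha'mul] at hx'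
        have ht : u ⬝ᵥ (c *ᵥ x) = 0 := by
          have := congrArg (fun z => w ⬝ᵥ z) hx'
          simpa [dotProduct_add, dotProduct_smul, hperp x,
            dotProduct_comm w u, huw] using this
        have : a *ᵥ x = 0 := by rwa [ht, zero_smul, add_zero] at hx'
        exact this
      -- strict
      have hkerlt : LinearMap.ker a'.mulVecLin < LinearMap.ker a.mulVecLin := by
        refine lt_of_le_of_ne hkerle ?_
        intro heq
        have hv0' : v0 ∈ LinearMap.ker a'.mulVecLin := heq.symm ▸ hv0mem
        have : a' *ᵥ v0 = 0 := hv0'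
        rw [ha'mul, hv0, ← hw, huw, zero_add, one_smul] at this
        exact hune this
      have hranklt : Module.finrank k (LinearMap.ker a'.mulVecLin) ≤ N := by
        have := Submodule.finrank_lt_finrank_of_lt hkerlt
        omega
      -- hypotheses for a'
      have hcomm' : a'ᵀ * c = cᵀ * a' := by
        rw [ha', Matrix.transpose_add, Matrix.transpose_mul, hs1symm, add_mul, mul_add, hcomm,
          mul_assoc]
      have hcoprime' : ∃ x y : Matrix (Fin n) (Fin n) k, x * a' + y * c = 1 := by
        obtain ⟨x, y, hxy⟩ := hcoprime
        exact ⟨x, y - x * s1, by rw [ha', ← hxy]; noncomm_ring⟩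
      obtain ⟨s2, hs2symm, hs2unit⟩ := ih a' c hcomm' hcoprime' hranklt
      refine ⟨s1 + s2, by rw [Matrix.transpose_add, hs1symm, hs2symm], ?_⟩
      have : a + (s1 + s2) * c = a' + s2 * c := by rw [ha']; noncomm_ring
      rwa [this]

/-- Let `A = M(n,k)`, `k` a field, with the transpose involution.
If `a, c ∈ A` satisfy `aᵗ c = cᵗ a` and `Aa + Ac = A`, then there is a symmetric
matrix `s` with `a + s·c` invertible. -/
theorem exists_symmetric_add_smul_isUnit {n : ℕ} {k : Type*} [Field k]
    (a c : Matrix (Fin n) (Fin n) k)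
    (hcomm : aᵀ * c = cᵀ * a)
    (hcoprime : ∃ x y : Matrix (Fin n) (Fin n) k, x * a + y * c = 1) :
    ∃ s : Matrix (Fin n) (Fin n) k, sᵀ = s ∧ IsUnit (a + s * c) := by
  exact aux_step (Module.finrank k (LinearMap.ker a.mulVecLin)) a c hcomm hcoprime le_rfl
end

section
/- Let G be a finite group acting on a set B, and for each b ∈ B let E_b be a finite-dimensional complex inner product space, with linear isomorphisms τ_g : E_b → E_{g·b} for each g ∈ G satisfying τ_1 = id, τ_{gh} = τ_g ∘ τ_h, and ⟨τ_g f, τ_g h⟩ = ⟨f, h⟩. Suppose given a family Γ = {γ_{b',b} : E_b → E_{b'}}_{b,b' ∈ B} of linear isomorphisms such that (i) ⟨γ_{b',b}(f), γ_{b',b}(h)⟩ = ⟨f,h⟩ for f,h ∈ E_b; (ii) ⟨γ_{b',b}(f), h⟩ = ⟨f, γ_{b,b'}(h)⟩ for f ∈ E_b, h ∈ E_{b'}; (iii) γ_{b,b'} ∘ γ_{b',b} = id_{E_b}; (iv) γ_{b'',b'} ∘ γ_{b',b} = μ(b'',b',b) · γ_{b'',b} for a map μ : B×B×B → ℂ^×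 (the multiplier of Γ); and (v) τ_g ∘ γ_{b',b} = γ_{g·b', g·b} ∘ τ_g. Then for each b ∈ B, the operators ρ^b_g := γ_{b, g·b} ∘ τ_g on V_b := E_b satisfy ρ^b_g ∘ ρ^b_h = c(g,h) · ρ^b_{gh} for all g,h ∈ G, where c(g,h) = μ(b, g·b, gh·b); that is, ρ^b is a projective unitary representation of G with 2-cocycle c. Moreover, if the multiplier μ is the constant function 1 (the connection is flat), then ρ^b is a true unitary representation of G. -/
open scoped ComplexInnerProductSpace

/-- Contraction of a finite `G`-Hilbert bundle over a base point `b`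
along a `G`-equivariant connection `Γ = {γ_{b',b}}` with multiplier `μ` yields a
projective unitary representation `ρ^b_g = γ_{b,g·b} ∘ τ_g` with 2-cocycle
`c(g,h) = μ(b, g·b, gh·b)`; if the connection is flat (`μ ≡ 1`), `ρ^b` is a true
unitary representation. -/
theorem contraction_projective_representation
    {G B : Type*} [Group G] [Finite G] [MulAction G B]
    (E : B → Type*) [∀ b, NormedAddCommGroup (E b)] [∀ b, InnerProductSpace ℂ (E b)]
    [∀ b, FiniteDimensional ℂ (E b)]
    (τ : ∀ (g : G) (b : B), E b ≃ₗ[ℂ] E (g • b))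
    (τ_one : ∀ (b : B) (v : E b), τ 1 b v = (one_smul G b).symm ▸ v)
    (τ_mul : ∀ (g h : G) (b : B) (v : E b),
      τ g (h • b) (τ h b v) = (mul_smul g h b) ▸ (τ (g * h) b v))
    (τ_unitary : ∀ (g : G) (b : B) (f f' : E b), ⟪τ g b f, τ g b f'⟫ = ⟪f, f'⟫)
    (γ : ∀ b' b : B, E b ≃ₗ[ℂ] E b')
    (μ : B → B → B → ℂˣ)
    (γ_unitary : ∀ (b b' : B) (f f' : E b), ⟪γ b' b f, γ b' b f'⟫ = ⟪f, f'⟫)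
    (γ_adjoint : ∀ (b b' : B) (f : E b) (f' : E b'), ⟪γ b' b f, f'⟫ = ⟪f, γ b b' f'⟫)
    (γ_inv : ∀ (b b' : B) (f : E b), γ b b' (γ b' b f) = f)
    (γ_mul : ∀ (b b' b'' : B) (f : E b),
      γ b'' b' (γ b' b f) = (μ b'' b' b : ℂ) • γ b'' b f)
    (γ_equivariant : ∀ (g : G) (b b' : B) (f : E b),
      τ g b' (γ b' b f) = γ (g • b') (g • b) (τ g b f))
    (b : B) :
    (∀ (g h : G) (v : E b),
      γ b (g • b) (τ g b (γ b (h • b) (τ h b v)))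
        = (μ b (g • b) ((g * h) • b) : ℂ) • γ b ((g * h) • b) (τ (g * h) b v)) ∧
    (∀ (g : G) (v w : E b),
      ⟪γ b (g • b) (τ g b v), γ b (g • b) (τ g b w)⟫ = ⟪v, w⟫) ∧
    ((∀ x y z : B, μ x y z = 1) →
      (∀ v : E b, γ b ((1 : G) • b) (τ 1 b v) = v) ∧
      (∀ (g h : G) (v : E b),
        γ b (g • b) (τ g b (γ b (h • b) (τ h b v)))
          = γ b ((g * h) • b) (τ (g * h) b v))) := by
  have cast_gamma : ∀ {x y : B} (e : x = y) (w : E x), γ b y (e ▸ w) = γ b x w := by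
    rintro x y rfl w; rfl
  have part1 : ∀ (g h : G) (v : E b),
      γ b (g • b) (τ g b (γ b (h • b) (τ h b v)))
        = (μ b (g • b) ((g * h) • b) : ℂ) • γ b ((g * h) • b) (τ (g * h) b v) := by
    intro g h v
    rw [γ_equivariant, γ_mul, τ_mul, cast_gamma]
    congr 2
    rw [mul_smul]
  refine ⟨part1, ?_, ?_⟩
  · intro g v w
    rw [γ_unitary, τ_unitary]
  · intro hflat
    have hbb : ∀ v : E b, γ b b v = v := by
      intro v
      have h1 := γ_mul b b b v
      rw [γ_inv, hflat, Units.val_one, one_smul] at h1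
      exact h1.symm
    constructor
    · intro v
      rw [τ_one, cast_gamma, hbb]
    · intro g h v
      rw [part1, hflat, Units.val_one, one_smul]
end

section
/- Let a, c ∈ A_m be such that a or c is invertible and a* c = c* a. Then there exists a symmetric element s ∈ A_m^s such that a + s·c is invertible in A_m. (Here * is either the identity or the involution determined by x* = −x.) -/
open Polynomial

set_option synthInstance.maxHeartbeats 1000000

/-- The truncated polynomial algebra `A_m = k[x]/⟨x^m⟩`. -/
abbrev TruncPoly (k : Type*) [Field k] (m : ℕ) :=
  Polynomial k ⧸ Ideal.span {(Polynomial.X : Polynomial k) ^ m}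

/-- The class of `x` in `A_m = k[x]/⟨x^m⟩`. -/
noncomputable def xbar (k : Type*) [Field k] (m : ℕ) : TruncPoly k m :=
  Ideal.Quotient.mk _ (Polynomial.X : Polynomial k)

/-- If `a, c ∈ A_m` with `a` or `c` invertible and `a* c = c* a`,
then there is a symmetric `s` with `a + s·c` invertible. Here `*` is either the
identity or the involution determined by `x* = −x`. -/
theorem exists_symmetric_add_mul_isUnit_truncPoly
    {k : Type*} [Field k] [Fintype k] (hodd : Odd (Fintype.card k))
    {m : ℕ} (hm : 0 < m)
    (σ : TruncPoly k m →ₐ[k] TruncPoly k m)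
    (hσ : σ (xbar k m) = xbar k m ∨ σ (xbar k m) = -xbar k m)
    (a c : TruncPoly k m) (hunit : IsUnit a ∨ IsUnit c)
    (hcomm : σ a * c = σ c * a) :
    ∃ s : TruncPoly k m, σ s = s ∧ IsUnit (a + s * c) := by
  -- every element of the truncated polynomial ring is a unit or nilpotent
  have key : ∀ b : TruncPoly k m, IsUnit b ∨ IsNilpotent b := by
    intro b
    obtain ⟨p, rfl⟩ := Ideal.Quotient.mk_surjective b
    set t : k := p.coeff 0 with ht
    have hdvd : (X : Polynomial k) ∣ (p - C t) := by
      rw [Polynomial.X_dvd_iff]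
      simp [ht]
    obtain ⟨q, hq⟩ := hdvd
    have hnil : IsNilpotent (Ideal.Quotient.mk (Ideal.span {(X : Polynomial k) ^ m})
        (p - C t)) := by
      refine ⟨m, ?_⟩
      rw [← map_pow, hq, mul_pow, Ideal.Quotient.eq_zero_iff_mem]
      exact Ideal.mul_mem_right _ _ (Ideal.subset_span rfl)
    by_cases h0 : t = 0
    · right
      simpa [h0] using hnil
    · left
      have hu : IsUnit (Ideal.Quotient.mk (Ideal.span {(X : Polynomial k) ^ m}) (C t)) :=
        (Polynomial.isUnit_C.mpr (Ne.isUnit h0)).map _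
      have := hnil.isUnit_add_right_of_commute hu (Commute.all _ _)
      simpa [sub_add_cancel] using this
  by_cases ha : IsUnit a
  · exact ⟨0, by simp, by simpa using ha⟩
  · have hc : IsUnit c := hunit.resolve_left ha
    have hnila : IsNilpotent a := (key a).resolve_left ha
    refine ⟨1, map_one σ, ?_⟩
    rw [one_mul]
    exact hnila.isUnit_add_right_of_commute hc (Commute.all _ _)
end

section
/- Let a, b ∈ A_m be two non-invertible symmetric elements. Then there exists a symmetric invertible element x ∈ A_m^× ∩ A_m^s such that a − x^{-1} and b + x are symmetric invertible elements of A_m. (Here * is either the identity or the involution determined by x* = −x.) -/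
open Polynomial

set_option synthInstance.maxHeartbeats 1000000

/-! A non-unit of `A_m` has zero constant term, hence is a multiple of the nilpotent `x` and is
itself nilpotent. So the symmetric unit `x = 1` already works: `a - 1` and `b + 1` are a unit plus
a nilpotent element. -/

namespace TruncPoly

variable {k : Type*} [Field k] {m : ℕ}

theorem isNilpotent_xbar : IsNilpotent (xbar k m) :=
  ⟨m, by
    rw [xbar, ← map_pow, Ideal.Quotient.eq_zero_iff_mem]
    exact Ideal.mem_span_singleton_self _⟩

theorem mk_eq_xbar_mul_add_algebraMap (p : k[X]) :
    (Ideal.Quotient.mk _ p : TruncPoly k m) =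
      xbar k m * Ideal.Quotient.mk _ p.divX + algebraMap k _ (p.coeff 0) := by
  conv_lhs => rw [← X_mul_divX_add p]
  rw [map_add, map_mul]
  rfl

theorem isNilpotent_of_not_isUnit {a : TruncPoly k m} (ha : ¬IsUnit a) : IsNilpotent a := by
  obtain ⟨p, rfl⟩ := Ideal.Quotient.mk_surjective a
  have hX : IsNilpotent (xbar k m * Ideal.Quotient.mk _ p.divX) :=
    (Commute.all _ _).isNilpotent_mul_right isNilpotent_xbar
  rw [mk_eq_xbar_mul_add_algebraMap] at ha ⊢
  by_cases hc : p.coeff 0 = 0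
  · simpa [hc] using hX
  · exact absurd (hX.isUnit_add_right_of_commute
      ((isUnit_iff_ne_zero.mpr hc).map _) (Commute.all _ _)) ha

end TruncPoly

theorem exists_symmetric_unit_sub_add_isUnit_truncPoly_general
    {k : Type*} [Field k]
    {m : ℕ}
    (σ : TruncPoly k m →ₐ[k] TruncPoly k m)
    (a b : TruncPoly k m)
    (ha : σ a = a) (hb : σ b = b) (ha' : ¬ IsUnit a) (hb' : ¬ IsUnit b) :
    ∃ x : (TruncPoly k m)ˣ, σ (x : TruncPoly k m) = (x : TruncPoly k m) ∧
      σ (a - (↑x⁻¹ : TruncPoly k m)) = a - (↑x⁻¹ : TruncPoly k m) ∧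
      IsUnit (a - (↑x⁻¹ : TruncPoly k m)) ∧
      σ (b + (x : TruncPoly k m)) = b + (x : TruncPoly k m) ∧
      IsUnit (b + (x : TruncPoly k m)) := by
  refine ⟨1, by simp, by simp [ha], ?_, by simp [hb], ?_⟩
  · simpa using (TruncPoly.isNilpotent_of_not_isUnit ha').isUnit_sub_one
  · simpa using (TruncPoly.isNilpotent_of_not_isUnit hb').isUnit_add_one

/-- If `a, b ∈ A_m` are non-invertible symmetric elements, then
there is a symmetric invertible `x` such that `a − x⁻¹` and `b + x` are symmetric
invertible elements. Here `*` is either the identity or the involution `x* = −x`. -/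
theorem exists_symmetric_unit_sub_add_isUnit_truncPoly
    {k : Type*} [Field k] [Fintype k] (hodd : Odd (Fintype.card k))
    {m : ℕ} (hm : 0 < m)
    (σ : TruncPoly k m →ₐ[k] TruncPoly k m)
    (hσ : σ (xbar k m) = xbar k m ∨ σ (xbar k m) = -xbar k m)
    (a b : TruncPoly k m)
    (ha : σ a = a) (hb : σ b = b) (ha' : ¬ IsUnit a) (hb' : ¬ IsUnit b) :
    ∃ x : (TruncPoly k m)ˣ, σ (x : TruncPoly k m) = (x : TruncPoly k m) ∧
      σ (a - (↑x⁻¹ : TruncPoly k m)) = a - (↑x⁻¹ : TruncPoly k m) ∧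
      IsUnit (a - (↑x⁻¹ : TruncPoly k m)) ∧
      σ (b + (x : TruncPoly k m)) = b + (x : TruncPoly k m) ∧
      IsUnit (b + (x : TruncPoly k m)) :=
  exists_symmetric_unit_sub_add_isUnit_truncPoly_general σ a b ha hb ha' hb'
end

section
/- Let m be an odd positive integer. Then: (1) the form tr on A_m defined by tr(Σ_{i=0}^{m−1} a_i x^i) = a_{m−1} is k-linear and invariant under the involution, i.e. tr(a*) = tr(a) for all a ∈ A_m; and (2) if * is the non-trivial involution x* = −x, then the k-bilinear form (t,s) ↦ tr(B_Q(t,s)) = tr(t* s + t s*) on A_m is a non-degenerate symmetric bilinear form. -/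
open Polynomial

set_option synthInstance.maxHeartbeats 1000000

/-!
The involution `σ` is the substitution `x ↦ -x`, which multiplies the coefficient of `x^i` by
`(-1)^i`; as `m - 1` is even, `tr` is `σ`-invariant. Since `σ` is an involution fixing `tr`,
`tr (σ t * s + t * σ s) = 2 * tr (σ t * s)`, and `2 ≠ 0` because `q` is odd. Nondegeneracy thus
reduces to that of the trace pairing `(u, s) ↦ tr (u * s)`, which holds because pairing `u`
with `x^(m-1-i)` reads off its `i`-th coefficient.
-/

theorem FiniteField.two_ne_zero_of_odd_card {k : Type*} [Field k] [Fintype k]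
    (h : Odd (Fintype.card k)) : (2 : k) ≠ 0 :=
  Ring.two_ne_zero fun hchar ↦ by
    have := FiniteField.even_card_of_char_two hchar
    rw [Nat.odd_iff] at h
    omega

theorem Polynomial.coeff_comp_neg_X {R : Type*} [CommRing R] (p : R[X]) (n : ℕ) :
    (p.comp (-X)).coeff n = (-1) ^ n * p.coeff n := by
  induction p using Polynomial.induction_on' with
  | add p q hp hq => rw [add_comp, coeff_add, coeff_add, hp, hq, mul_add]
  | monomial d a =>
    have hX : (-X : R[X]) ^ d = C ((-1 : R) ^ d) * X ^ d := by rw [neg_pow, C_pow, C_neg, C_1]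
    rw [← C_mul_X_pow_eq_monomial, mul_comp, C_comp, X_pow_comp, hX, ← mul_assoc, ← C_mul,
      coeff_C_mul_X_pow, coeff_C_mul_X_pow]
    split_ifs with h
    · rw [h, mul_comm]
    · rw [mul_zero]

section Involution

variable {R A : Type*} [CommRing R] [CommRing A] [Algebra R A]
  {σ : A →ₐ[R] A} {tr : A →ₗ[R] R}

theorem LinearMap.map_conj_mul_add_mul_conj (hσ : Function.Involutive σ)
    (htr : ∀ a, tr (σ a) = tr a) (t s : A) :
    tr (σ t * s + t * σ s) = 2 * tr (σ t * s) := by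
  have : tr (t * σ s) = tr (σ t * s) := by rw [← htr, map_mul, hσ]
  rw [map_add, this, two_mul]

theorem LinearMap.eq_zero_of_map_conj_mul_add_mul_conj [NoZeroDivisors R]
    (h2 : (2 : R) ≠ 0) (hσ : Function.Involutive σ) (htr : ∀ a, tr (σ a) = tr a)
    (hnd : ∀ u, (∀ s, tr (u * s) = 0) → u = 0) {t : A}
    (ht : ∀ s, tr (σ t * s + t * σ s) = 0) : t = 0 := by
  have hσt : σ t = 0 := hnd _ fun s ↦ by
    simpa [LinearMap.map_conj_mul_add_mul_conj hσ htr, h2] using ht s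
  rw [← hσ t, hσt, map_zero]

end Involution

namespace TruncPoly

variable {k : Type*} [Field k] {m : ℕ} {σ : TruncPoly k m →ₐ[k] TruncPoly k m}

theorem mk_eq_zero_of_coeff_eq_zero {p : k[X]} (hp : ∀ i < m, p.coeff i = 0) :
    (Ideal.Quotient.mk _ p : TruncPoly k m) = 0 := by
  rw [Ideal.Quotient.eq_zero_iff_mem, Ideal.mem_span_singleton]
  exact X_pow_dvd_iff.mpr hp

theorem aeval_xbar (p : k[X]) : aeval (xbar k m) p = Ideal.Quotient.mk _ p := by
  simpa [xbar] using aeval_algHom_apply (Ideal.Quotient.mkₐ k (Ideal.span {(X : k[X]) ^ m})) X p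

theorem algHom_mk_eq_mk_comp_neg_X (hσ : σ (xbar k m) = -xbar k m) (p : k[X]) :
    σ (Ideal.Quotient.mk _ p) = Ideal.Quotient.mk _ (p.comp (-X)) := by
  rw [← aeval_xbar, ← aeval_algHom_apply, hσ, ← aeval_xbar, aeval_comp, map_neg, aeval_X]

theorem algHom_involutive (hσ : σ (xbar k m) = -xbar k m) : Function.Involutive σ := by
  intro a
  obtain ⟨p, rfl⟩ := Ideal.Quotient.mk_surjective a
  rw [algHom_mk_eq_mk_comp_neg_X hσ, algHom_mk_eq_mk_comp_neg_X hσ, comp_neg_X_comp_neg_X]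

section Trace

variable (hm : 0 < m) {tr : TruncPoly k m →ₗ[k] k}
  (htr : ∀ i < m, tr (Ideal.Quotient.mk _ ((X : k[X]) ^ i)) = if i = m - 1 then 1 else 0)
include hm htr

theorem tr_mk_X_pow (n : ℕ) :
    tr (Ideal.Quotient.mk _ ((X : k[X]) ^ n)) = (X ^ n : k[X]).coeff (m - 1) := by
  rw [coeff_X_pow]
  by_cases hn : n < m
  · simp only [htr n hn, eq_comm]
  · rw [mk_eq_zero_of_coeff_eq_zero fun i hi ↦ by rw [coeff_X_pow]; exact if_neg (by omega),
      map_zero, if_neg (by omega)]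

theorem tr_mk (p : k[X]) : tr (Ideal.Quotient.mk _ p) = p.coeff (m - 1) := by
  induction p using Polynomial.induction_on' with
  | add p q hp hq => rw [map_add, map_add, hp, hq, coeff_add]
  | monomial n a =>
    rw [← smul_X_eq_monomial, ← Ideal.Quotient.mkₐ_eq_mk k, map_smul, map_smul,
      Ideal.Quotient.mkₐ_eq_mk, tr_mk_X_pow hm htr, coeff_smul]

theorem eq_zero_of_forall_tr_mul_eq_zero {u : TruncPoly k m} (hu : ∀ s, tr (u * s) = 0) :
    u = 0 := by
  obtain ⟨p, rfl⟩ := Ideal.Quotient.mk_surjective u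
  refine mk_eq_zero_of_coeff_eq_zero fun i hi ↦ ?_
  have := hu (Ideal.Quotient.mk _ (X ^ (m - 1 - i)))
  rwa [← map_mul, tr_mk hm htr, coeff_mul_X_pow', if_pos (by omega), Nat.sub_sub_self (by omega)]
    at this

theorem tr_algHom_apply (hσ : σ (xbar k m) = -xbar k m) (hmodd : Odd m) (a : TruncPoly k m) :
    tr (σ a) = tr a := by
  obtain ⟨p, rfl⟩ := Ideal.Quotient.mk_surjective a
  rw [algHom_mk_eq_mk_comp_neg_X hσ, tr_mk hm htr, tr_mk hm htr, coeff_comp_neg_X,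
    (Nat.Odd.sub_odd hmodd odd_one).neg_one_pow, one_mul]

end Trace

end TruncPoly

/-- For `m` odd: (1) the linear form `tr` on `A_m` (picking the
coefficient of `x^{m−1}`) is invariant under the involution `x* = −x`; and (2) the
`k`-bilinear form `(t,s) ↦ tr(t* s + t s*)` is symmetric and non-degenerate. -/
theorem tr_invariant_and_trBQ_nondegenerate
    {k : Type*} [Field k] [Fintype k] (hodd : Odd (Fintype.card k))
    {m : ℕ} (hm : 0 < m) (hmodd : Odd m)
    (σ : TruncPoly k m →ₐ[k] TruncPoly k m) (hσ : σ (xbar k m) = -xbar k m)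
    (tr : TruncPoly k m →ₗ[k] k)
    (htr : ∀ i < m, tr (Ideal.Quotient.mk _ ((Polynomial.X : Polynomial k) ^ i))
      = if i = m - 1 then 1 else 0) :
    (∀ a : TruncPoly k m, tr (σ a) = tr a) ∧
    (∀ t s : TruncPoly k m, tr (σ t * s + t * σ s) = tr (σ s * t + s * σ t)) ∧
    (∀ t : TruncPoly k m, (∀ s : TruncPoly k m, tr (σ t * s + t * σ s) = 0) → t = 0) := by
  have htrσ := TruncPoly.tr_algHom_apply hm htr hσ hmodd
  refine ⟨htrσ, fun t s ↦ by rw [add_comm, mul_comm t, mul_comm s], fun t ↦ ?_⟩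
  exact LinearMap.eq_zero_of_map_conj_mul_add_mul_conj
    (FiniteField.two_ne_zero_of_odd_card hodd) (TruncPoly.algHom_involutive hσ) htrσ
    fun _ ↦ TruncPoly.eq_zero_of_forall_tr_mul_eq_zero hm htr
end
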